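/- arXiv:math/9801080 — 10 statements merged into one kernel-verified Lean document; each statement's English description precedes it below -/
import Mathlib

section
/- Let V be a finite-dimensional vector space over ℚ and let N : V → V be a nilpotent linear endomorphism. Suppose L and L′ are two families of subspaces of V indexed by ℤ such that each of L, L′: (i) is increasing, equals 0 for all sufficiently small indices and equals V for all sufficiently large indices; (ii) satisfies N(L_k) ⊆ L_{k−2} for all k; and (iii) for every natural number r: N^r maps L_r into L_{−r}, every element of L_{−r} is congruent modulo L_{−r−1} to N^r(y) for some y ∈ L_r, and every y ∈ L_r with N^r(y) ∈ L_{−r−1} lies in L_{r−1} (so N^r induces an isomorphism L_r/L_{r−1} ≅ L_{−r}/L_{−r−1}). Then L_k = L′_k for every integer k. -/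
/-- The defining properties of the monodromy-weight filtration of a nilpotent
endomorphism `N`: an increasing exhaustive filtration `L` indexed by `ℤ`, vanishing for
small indices and everything for large indices, with `N (L k) ⊆ L (k-2)`, such that
`N^r` induces an isomorphism `L r / L (r-1) ≅ L (-r) / L (-r-1)` for every `r : ℕ`. -/
def IsMonodromyWeightFiltration {V : Type*} [AddCommGroup V] [Module ℚ V]
    (N : V →ₗ[ℚ] V) (L : ℤ → Submodule ℚ V) : Prop :=
  (Monotone L ∧ (∃ k₀ : ℤ, ∀ k ≤ k₀, L k = ⊥) ∧ (∃ k₁ : ℤ, ∀ k ≥ k₁, L k = ⊤)) ∧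
  (∀ k : ℤ, ∀ x ∈ L k, N x ∈ L (k - 2)) ∧
  (∀ r : ℕ,
    (∀ y ∈ L (r : ℤ), (N ^ r) y ∈ L (-(r : ℤ))) ∧
    (∀ x ∈ L (-(r : ℤ)), ∃ y ∈ L (r : ℤ), x - (N ^ r) y ∈ L (-(r : ℤ) - 1)) ∧
    (∀ y ∈ L (r : ℤ), (N ^ r) y ∈ L (-(r : ℤ) - 1) → y ∈ L ((r : ℤ) - 1)))

/-!
For `r ≥ 0`, injectivity of `N ^ s` on `L s / L (s - 1)` for all `s > r`, together with
`N (L k) ⊆ L (k - 2)`, gives `L r = (N ^ (r + 1))⁻¹ (L (-r - 2))`, while surjectivity of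
`N ^ r` gives `L (-r) = N ^ r (L r) + L (-r - 1)`. Hence `L (-r)` is determined by `L (-r - 1)`
and `L (-r - 2)`. If `N ^ m = 0`, surjectivity also forces `L (-r) ⊆ L (-r - 1)` for `r ≥ m`,
so `L (-r) = 0` there, and a downward induction on `r` shows that every `L k` is determined
by `N` alone.
-/

namespace IsMonodromyWeightFiltration

variable {V : Type*} [AddCommGroup V] [Module ℚ V] {N : V →ₗ[ℚ] V} {L : ℤ → Submodule ℚ V}

theorem pow_apply_mem (hL : IsMonodromyWeightFiltration N L) (d : ℕ) {k : ℤ} {x : V}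
    (hx : x ∈ L k) : (N ^ d) x ∈ L (k - 2 * d) := by
  induction d with
  | zero => simpa using hx
  | succ d ih =>
    rw [pow_succ', Module.End.mul_apply]
    convert hL.2.1 _ _ ih using 2
    push_cast
    ring

theorem mem_of_pow_succ_apply_mem (hL : IsMonodromyWeightFiltration N L) {r : ℕ} {x : V}
    (hx : (N ^ (r + 1)) x ∈ L (-r - 2)) : x ∈ L r := by
  obtain ⟨k₁, htop⟩ := hL.1.2.2
  suffices descend : ∀ d : ℕ, x ∈ L (r + d) → x ∈ L r from
    descend (k₁ - r).toNat (by rw [htop _ (by omega)]; trivial)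
  intro d
  induction d with
  | zero => simp
  | succ d ih =>
    intro hxd
    apply ih
    have hpow : (N ^ (r + d + 1)) x = (N ^ d) ((N ^ (r + 1)) x) := by
      rw [← Module.End.mul_apply, ← pow_add]
      congr 2
      omega
    have hdeep : (N ^ (r + d + 1)) x ∈ L (-((r + d + 1 : ℕ) : ℤ) - 1) := by
      rw [hpow]
      exact hL.1.1 (by push_cast; omega) (hL.pow_apply_mem d hx)
    convert (hL.2.2 (r + d + 1)).2.2 x (by convert hxd using 2; push_cast; ring) hdeep using 2
    push_cast
    ring

theorem eq_comap (hL : IsMonodromyWeightFiltration N L) (r : ℕ) :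
    L r = (L (-((r + 2 : ℕ) : ℤ))).comap (N ^ (r + 1)) := by
  ext x
  have hidx : (-((r + 2 : ℕ) : ℤ)) = r - 2 * (r + 1 : ℕ) := by push_cast; ring
  rw [Submodule.mem_comap, hidx]
  refine ⟨hL.pow_apply_mem (r + 1), fun hx => hL.mem_of_pow_succ_apply_mem ?_⟩
  convert hx using 2
  push_cast
  ring

theorem eq_map_sup (hL : IsMonodromyWeightFiltration N L) (r : ℕ) :
    L (-r) = (L r).map (N ^ r) ⊔ L (-((r + 1 : ℕ) : ℤ)) := by
  have hidx : (-((r + 1 : ℕ) : ℤ)) = -r - 1 := by push_cast; ring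
  rw [hidx]
  apply le_antisymm
  · intro x hx
    obtain ⟨y, hy, hxy⟩ := (hL.2.2 r).2.1 x hx
    simpa using Submodule.add_mem_sup (Submodule.mem_map_of_mem (f := N ^ r) hy) hxy
  · exact sup_le (Submodule.map_le_iff_le_comap.2 (hL.2.2 r).1) (hL.1.1 (by omega))

theorem eq_bot_of_pow_eq_zero (hL : IsMonodromyWeightFiltration N L) {m : ℕ} (hm : N ^ m = 0)
    {r : ℕ} (hr : m ≤ r) : L (-r) = ⊥ := by
  obtain ⟨k₀, hbot⟩ := hL.1.2.1
  have hshift : ∀ s : ℕ, m ≤ s → L (-s) ≤ L (-((s + 1 : ℕ) : ℤ)) := fun s hs => by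
    rw [hL.eq_map_sup s, pow_eq_zero_of_le hs hm, Submodule.map_zero, bot_sup_eq]
  have hdescend : ∀ d : ℕ, L (-r) ≤ L (-((r + d : ℕ) : ℤ)) := by
    intro d
    induction d with
    | zero => rfl
    | succ d ih => exact ih.trans (hshift _ (by omega))
  refine eq_bot_iff.2 ((hdescend (r - k₀).toNat).trans (hbot _ ?_).le)
  have := Int.self_le_toNat (r - k₀)
  push_cast
  omega

theorem neg_eq_of_isNilpotent (hL : IsMonodromyWeightFiltration N L)
    {L' : ℤ → Submodule ℚ V} (hL' : IsMonodromyWeightFiltration N L') (hN : IsNilpotent N)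
    (r : ℕ) : L (-r) = L' (-r) := by
  obtain ⟨m, hm⟩ := hN
  suffices h : ∀ d s : ℕ, m ≤ s + d → L (-s) = L' (-s) from h m r (by omega)
  intro d
  induction d with
  | zero =>
    intro s hs
    rw [hL.eq_bot_of_pow_eq_zero hm (by omega), hL'.eq_bot_of_pow_eq_zero hm (by omega)]
  | succ d ih =>
    intro s hs
    rw [hL.eq_map_sup, hL'.eq_map_sup, hL.eq_comap, hL'.eq_comap,
      ih (s + 1) (by omega), ih (s + 2) (by omega)]

end IsMonodromyWeightFiltration

theorem stmt_1_general (V : Type*) [AddCommGroup V] [Module ℚ V]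
    (N : V →ₗ[ℚ] V) (hN : IsNilpotent N)
    (L L' : ℤ → Submodule ℚ V)
    (hL : IsMonodromyWeightFiltration N L) (hL' : IsMonodromyWeightFiltration N L') :
    ∀ k : ℤ, L k = L' k := by
  intro k
  obtain ⟨r, rfl | rfl⟩ := Int.eq_nat_or_neg k
  · rw [hL.eq_comap, hL'.eq_comap, hL.neg_eq_of_isNilpotent hL' hN]
  · exact hL.neg_eq_of_isNilpotent hL' hN r

theorem stmt_1 (V : Type*) [AddCommGroup V] [Module ℚ V] [FiniteDimensional ℚ V]
    (N : V →ₗ[ℚ] V) (hN : IsNilpotent N)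
    (L L' : ℤ → Submodule ℚ V)
    (hL : IsMonodromyWeightFiltration N L) (hL' : IsMonodromyWeightFiltration N L') :
    ∀ k : ℤ, L k = L' k :=
  stmt_1_general V N hN L L' hL hL'
end

section
/- Let B := ℂ[z₁, z₂, z₃, w₁, w₂, w₃]/(z₁z₂z₃ − w₁w₂w₃) and let B_{z₁z₂} denote the localization of B away from (the class of) z₁z₂. Let ψ : ℂ[a, b, c, d, e] → B_{z₁z₂} be the ℂ-algebra homomorphism determined by ψ(a) = w₁/z₁, ψ(b) = w₂/z₂, ψ(c) = z₁, ψ(d) = z₂, ψ(e) = w₃. Since ψ(cd) is a unit in B_{z₁z₂}, ψ induces a ℂ-algebra homomorphism from the localization of ℂ[a, b, c, d, e] away from cd to B_{z₁z₂}, and this induced homomorphism is bijective (a ℂ-algebra isomorphism). -/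
set_option synthInstance.maxHeartbeats 1000000
set_option maxHeartbeats 1000000

noncomputable section

/-- The polynomial `z₁z₂z₃ - w₁w₂w₃` in `ℂ[z₁, z₂, z₃, w₁, w₂, w₃]` (variables `0,1,2`
are `z₁,z₂,z₃`, variables `3,4,5` are `w₁,w₂,w₃`). -/
abbrev triplePoly : MvPolynomial (Fin 6) ℂ :=
  MvPolynomial.X 0 * MvPolynomial.X 1 * MvPolynomial.X 2 -
    MvPolynomial.X 3 * MvPolynomial.X 4 * MvPolynomial.X 5

/-- The ring `B = ℂ[z₁, z₂, z₃, w₁, w₂, w₃]/(z₁z₂z₃ - w₁w₂w₃)`. -/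
abbrev Bq : Type := MvPolynomial (Fin 6) ℂ ⧸ Ideal.span {triplePoly}

abbrev z1B : Bq := Ideal.Quotient.mk _ (MvPolynomial.X 0)
abbrev z2B : Bq := Ideal.Quotient.mk _ (MvPolynomial.X 1)
abbrev w1B : Bq := Ideal.Quotient.mk _ (MvPolynomial.X 3)
abbrev w2B : Bq := Ideal.Quotient.mk _ (MvPolynomial.X 4)
abbrev w3B : Bq := Ideal.Quotient.mk _ (MvPolynomial.X 5)

/-- The localization `B_{z₁z₂}` of `B` away from `z₁z₂`. -/
abbrev BLoc : Type := Localization.Away (z1B * z2B)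

/-- The `ℂ`-algebra homomorphism `ψ : ℂ[a, b, c, d, e] → B_{z₁z₂}` with
`ψ(a) = w₁/z₁ = (w₁z₂)/(z₁z₂)`, `ψ(b) = w₂/z₂ = (w₂z₁)/(z₁z₂)`, `ψ(c) = z₁`,
`ψ(d) = z₂`, `ψ(e) = w₃`. -/
abbrev psiChart : MvPolynomial (Fin 5) ℂ →ₐ[ℂ] BLoc :=
  MvPolynomial.aeval
    ![Localization.mk (w1B * z2B) ⟨z1B * z2B, Submonoid.mem_powers (z1B * z2B)⟩,
      Localization.mk (w2B * z1B) ⟨z1B * z2B, Submonoid.mem_powers (z1B * z2B)⟩,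
      algebraMap Bq BLoc z1B,
      algebraMap Bq BLoc z2B,
      algebraMap Bq BLoc w3B]

open MvPolynomial

abbrev P5 := MvPolynomial (Fin 5) ℂ
abbrev LL : Type := Localization.Away (X 2 * X 3 : P5)

def vA : Fin 6 → LL :=
  ![algebraMap P5 LL (X 2), algebraMap P5 LL (X 3),
    algebraMap P5 LL (X 0 * X 1 * X 4), algebraMap P5 LL (X 0 * X 2),
    algebraMap P5 LL (X 1 * X 3), algebraMap P5 LL (X 4)]

lemma vA0 : vA 0 = algebraMap P5 LL (X 2) := rfl
lemma vA1 : vA 1 = algebraMap P5 LL (X 3) := rfl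
lemma vA2 : vA 2 = algebraMap P5 LL (X 0 * X 1 * X 4) := rfl
lemma vA3 : vA 3 = algebraMap P5 LL (X 0 * X 2) := rfl
lemma vA4 : vA 4 = algebraMap P5 LL (X 1 * X 3) := rfl
lemma vA5 : vA 5 = algebraMap P5 LL (X 4) := rfl

/-- The map ℂ[6 vars] → L sending z1↦c, z2↦d, z3↦abe, w1↦ac, w2↦bd, w3↦e. -/
def alphaC : MvPolynomial (Fin 6) ℂ →ₐ[ℂ] LL := aeval vA

lemma alphaC_triple : alphaC triplePoly = 0 := by
  simp only [alphaC, triplePoly, map_sub, map_mul, aeval_X, vA0, vA1, vA2, vA3, vA4, vA5]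
  simp only [← map_mul, ← map_sub]
  rw [show (X 2 * X 3 * (X 0 * X 1 * X 4) - X 0 * X 2 * (X 1 * X 3) * X 4 : P5) = 0 by ring]
  simp

def betaC : Bq →+* LL :=
  Ideal.Quotient.lift _ alphaC.toRingHom (by
    intro a ha
    rw [Ideal.mem_span_singleton] at ha
    obtain ⟨c, rfl⟩ := ha
    simp [map_mul, alphaC_triple])

lemma betaC_mk (p : MvPolynomial (Fin 6) ℂ) :
    betaC (Ideal.Quotient.mk _ p) = alphaC p := rfl

lemma betaC_unit : IsUnit (betaC (z1B * z2B)) := by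
  rw [map_mul, betaC_mk, betaC_mk]
  simp only [alphaC, aeval_X, vA0, vA1]
  rw [← map_mul]
  exact IsLocalization.Away.algebraMap_isUnit (S := LL) (X 2 * X 3)

def chiC : BLoc →+* LL :=
  IsLocalization.Away.lift (S := BLoc) (z1B * z2B) betaC_unit

lemma relB : (Ideal.Quotient.mk (Ideal.span {triplePoly}) (X 0 * X 1 * X 2) : Bq)
    = Ideal.Quotient.mk _ (X 3 * X 4 * X 5) := by
  rw [Ideal.Quotient.eq]
  exact Ideal.subset_span rfl

lemma hre : z1B * z2B * (Ideal.Quotient.mk _ (X 2) : Bq) = w1B * w2B * w3B := by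
  simp only [z1B, z2B, w1B, w2B, w3B, ← map_mul]
  exact relB

lemma hu : IsUnit (algebraMap Bq BLoc (z1B * z2B)) :=
  IsLocalization.Away.algebraMap_isUnit (S := BLoc) (z1B * z2B)

lemma mkspec1 : Localization.mk (w1B * z2B) ⟨z1B * z2B, Submonoid.mem_powers (z1B * z2B)⟩
    * algebraMap Bq BLoc (z1B * z2B) = algebraMap Bq BLoc (w1B * z2B) := by
  rw [Localization.mk_eq_mk']
  exact IsLocalization.mk'_spec _ _ _

lemma mkspec2 : Localization.mk (w2B * z1B) ⟨z1B * z2B, Submonoid.mem_powers (z1B * z2B)⟩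
    * algebraMap Bq BLoc (z1B * z2B) = algebraMap Bq BLoc (w2B * z1B) := by
  rw [Localization.mk_eq_mk']
  exact IsLocalization.mk'_spec _ _ _

lemma psi0 : psiChart (X 0)
    = Localization.mk (w1B * z2B) ⟨z1B * z2B, Submonoid.mem_powers (z1B * z2B)⟩ := by
  rw [psiChart, aeval_X]; rfl
lemma psi1 : psiChart (X 1)
    = Localization.mk (w2B * z1B) ⟨z1B * z2B, Submonoid.mem_powers (z1B * z2B)⟩ := by
  rw [psiChart, aeval_X]; rfl
lemma psi2 : psiChart (X 2) = algebraMap Bq BLoc z1B := by rw [psiChart, aeval_X]; rfl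
lemma psi3 : psiChart (X 3) = algebraMap Bq BLoc z2B := by rw [psiChart, aeval_X]; rfl
lemma psi4 : psiChart (X 4) = algebraMap Bq BLoc w3B := by rw [psiChart, aeval_X]; rfl

lemma hcU : IsUnit (psiChart.toRingHom (X 2 * X 3)) := by
  show IsUnit (psiChart (X 2 * X 3))
  rw [map_mul, psi2, psi3]
  have := hu
  rwa [map_mul] at this

def psiL : LL →+* BLoc := IsLocalization.Away.lift (S := LL) (X 2 * X 3) hcU

lemma psiL_aL (p : P5) : psiL (algebraMap P5 LL p) = psiChart p :=
  IsLocalization.Away.lift_eq (X 2 * X 3) hcU p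

lemma chiC_aB (b : Bq) : chiC (algebraMap Bq BLoc b) = betaC b :=
  IsLocalization.Away.lift_eq (z1B * z2B) betaC_unit b

lemma comp1 : psiL.comp chiC = RingHom.id BLoc := by
  refine IsLocalization.ringHom_ext (S := BLoc) (Submonoid.powers (z1B * z2B)) (j := psiL.comp chiC) (k := RingHom.id BLoc) ?_
  apply Ideal.Quotient.ringHom_ext
  apply MvPolynomial.ringHom_ext
  · intro r
    simp only [RingHom.comp_apply, RingHom.id_apply]
    have h1 : (Ideal.Quotient.mk (Ideal.span {triplePoly}) (C r) : Bq)
        = algebraMap ℂ Bq r := by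
      rw [IsScalarTower.algebraMap_apply ℂ (MvPolynomial (Fin 6) ℂ) Bq,
        MvPolynomial.algebraMap_eq]
      rfl
    rw [h1, ← IsScalarTower.algebraMap_apply ℂ Bq BLoc]
    have h2 : chiC (algebraMap ℂ BLoc r) = algebraMap ℂ LL r := by
      rw [IsScalarTower.algebraMap_apply ℂ Bq BLoc, chiC_aB,
        ← h1, betaC_mk, ← MvPolynomial.algebraMap_eq]
      exact alphaC.commutes r
    rw [h2, IsScalarTower.algebraMap_apply ℂ P5 LL, MvPolynomial.algebraMap_eq,
      psiL_aL]
    exact psiChart.commutes r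
  · intro i
    simp only [RingHom.comp_apply, RingHom.id_apply]
    rw [chiC_aB, betaC_mk]
    rw [show alphaC (X i) = vA i from aeval_X _ _]
    fin_cases i
    · show psiL (vA 0) = algebraMap Bq BLoc z1B
      rw [vA0, psiL_aL, psi2]
    · show psiL (vA 1) = algebraMap Bq BLoc z2B
      rw [vA1, psiL_aL, psi3]
    · show psiL (vA 2) = algebraMap Bq BLoc (Ideal.Quotient.mk _ (X 2))
      rw [vA2, psiL_aL, map_mul, map_mul, psi0, psi1, psi4]
      apply hu.mul_right_cancel
      apply hu.mul_right_cancel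
      calc Localization.mk (w1B * z2B) ⟨z1B * z2B, Submonoid.mem_powers (z1B * z2B)⟩
            * Localization.mk (w2B * z1B) ⟨z1B * z2B, Submonoid.mem_powers (z1B * z2B)⟩
            * algebraMap Bq BLoc w3B * algebraMap Bq BLoc (z1B * z2B)
            * algebraMap Bq BLoc (z1B * z2B)
          = (Localization.mk (w1B * z2B) ⟨z1B * z2B, Submonoid.mem_powers (z1B * z2B)⟩
              * algebraMap Bq BLoc (z1B * z2B))
            * ((Localization.mk (w2B * z1B) ⟨z1B * z2B, Submonoid.mem_powers (z1B * z2B)⟩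
              * algebraMap Bq BLoc (z1B * z2B)) * algebraMap Bq BLoc w3B) := by ring
        _ = algebraMap Bq BLoc (w1B * z2B) * (algebraMap Bq BLoc (w2B * z1B)
              * algebraMap Bq BLoc w3B) := by rw [mkspec1, mkspec2]
        _ = algebraMap Bq BLoc (w1B * z2B * (w2B * z1B * w3B)) := by
              simp only [map_mul]
        _ = algebraMap Bq BLoc ((Ideal.Quotient.mk _ (X 2) : Bq) * (z1B * z2B)
              * (z1B * z2B)) := by
              congr 1
              linear_combination (-(z1B * z2B)) * hre
        _ = algebraMap Bq BLoc (Ideal.Quotient.mk _ (X 2))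
              * algebraMap Bq BLoc (z1B * z2B) * algebraMap Bq BLoc (z1B * z2B) := by
              rw [map_mul, map_mul]
    · show psiL (vA 3) = algebraMap Bq BLoc w1B
      rw [vA3, psiL_aL, map_mul, psi0, psi2]
      have hmul : IsUnit (algebraMap Bq BLoc z1B * algebraMap Bq BLoc z2B) := by
        have h := hu; rwa [map_mul] at h
      have hu2 : IsUnit (algebraMap Bq BLoc z2B) := isUnit_of_mul_isUnit_right hmul
      apply hu2.mul_right_cancel
      calc Localization.mk (w1B * z2B) ⟨z1B * z2B, Submonoid.mem_powers (z1B * z2B)⟩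
            * algebraMap Bq BLoc z1B * algebraMap Bq BLoc z2B
          = Localization.mk (w1B * z2B) ⟨z1B * z2B, Submonoid.mem_powers (z1B * z2B)⟩
            * algebraMap Bq BLoc (z1B * z2B) := by rw [map_mul]; ring
        _ = algebraMap Bq BLoc (w1B * z2B) := mkspec1
        _ = algebraMap Bq BLoc w1B * algebraMap Bq BLoc z2B := map_mul _ _ _
    · show psiL (vA 4) = algebraMap Bq BLoc w2B
      rw [vA4, psiL_aL, map_mul, psi1, psi3]
      have hmul : IsUnit (algebraMap Bq BLoc z1B * algebraMap Bq BLoc z2B) := by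
        have h := hu; rwa [map_mul] at h
      have hu1 : IsUnit (algebraMap Bq BLoc z1B) := isUnit_of_mul_isUnit_left hmul
      apply hu1.mul_right_cancel
      calc Localization.mk (w2B * z1B) ⟨z1B * z2B, Submonoid.mem_powers (z1B * z2B)⟩
            * algebraMap Bq BLoc z2B * algebraMap Bq BLoc z1B
          = Localization.mk (w2B * z1B) ⟨z1B * z2B, Submonoid.mem_powers (z1B * z2B)⟩
            * algebraMap Bq BLoc (z1B * z2B) := by rw [map_mul]; ring
        _ = algebraMap Bq BLoc (w2B * z1B) := mkspec2
        _ = algebraMap Bq BLoc w2B * algebraMap Bq BLoc z1B := map_mul _ _ _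
    · show psiL (vA 5) = algebraMap Bq BLoc w3B
      rw [vA5, psiL_aL, psi4]


lemma hbs : chiC (algebraMap Bq BLoc (z1B * z2B)) = algebraMap P5 LL (X 2 * X 3) := by
  rw [chiC_aB, map_mul, betaC_mk, betaC_mk]
  simp only [alphaC, aeval_X]
  rw [vA0, vA1, map_mul]

lemma huL : IsUnit (algebraMap P5 LL (X 2 * X 3)) :=
  IsLocalization.Away.algebraMap_isUnit (S := LL) (X 2 * X 3)

lemma comp2 : chiC.comp psiL = RingHom.id LL := by
  refine IsLocalization.ringHom_ext (S := LL) (Submonoid.powers (X 2 * X 3 : P5))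
    (j := chiC.comp psiL) (k := RingHom.id LL) ?_
  apply MvPolynomial.ringHom_ext
  · intro r
    simp only [RingHom.comp_apply, RingHom.id_apply]
    have h1 : (Ideal.Quotient.mk (Ideal.span {triplePoly}) (C r) : Bq)
        = algebraMap ℂ Bq r := by
      rw [IsScalarTower.algebraMap_apply ℂ (MvPolynomial (Fin 6) ℂ) Bq,
        MvPolynomial.algebraMap_eq]
      rfl
    rw [psiL_aL, psiChart, aeval_C, IsScalarTower.algebraMap_apply ℂ Bq BLoc,
      chiC_aB, ← h1, betaC_mk]
    simp only [alphaC, aeval_C]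
    rw [IsScalarTower.algebraMap_apply ℂ P5 LL, MvPolynomial.algebraMap_eq]
  · intro i
    simp only [RingHom.comp_apply, RingHom.id_apply]
    rw [psiL_aL]
    fin_cases i
    · show chiC (psiChart (X 0)) = algebraMap P5 LL (X 0)
      rw [psi0]
      apply huL.mul_right_cancel
      calc chiC (Localization.mk (w1B * z2B) ⟨z1B * z2B, Submonoid.mem_powers (z1B * z2B)⟩)
            * algebraMap P5 LL (X 2 * X 3)
          = chiC (Localization.mk (w1B * z2B) ⟨z1B * z2B, Submonoid.mem_powers (z1B * z2B)⟩
              * algebraMap Bq BLoc (z1B * z2B)) := by rw [map_mul chiC, hbs]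
        _ = chiC (algebraMap Bq BLoc (w1B * z2B)) := by rw [mkspec1]
        _ = alphaC (X 3) * alphaC (X 1) := by rw [chiC_aB, map_mul, betaC_mk, betaC_mk]
        _ = algebraMap P5 LL (X 0 * X 2) * algebraMap P5 LL (X 3) := by
              simp only [alphaC, aeval_X]; rw [vA3, vA1]
        _ = algebraMap P5 LL (X 0) * algebraMap P5 LL (X 2 * X 3) := by
              simp only [map_mul]; ring
    · show chiC (psiChart (X 1)) = algebraMap P5 LL (X 1)
      rw [psi1]
      apply huL.mul_right_cancel
      calc chiC (Localization.mk (w2B * z1B) ⟨z1B * z2B, Submonoid.mem_powers (z1B * z2B)⟩)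
            * algebraMap P5 LL (X 2 * X 3)
          = chiC (Localization.mk (w2B * z1B) ⟨z1B * z2B, Submonoid.mem_powers (z1B * z2B)⟩
              * algebraMap Bq BLoc (z1B * z2B)) := by rw [map_mul chiC, hbs]
        _ = chiC (algebraMap Bq BLoc (w2B * z1B)) := by rw [mkspec2]
        _ = alphaC (X 4) * alphaC (X 0) := by rw [chiC_aB, map_mul, betaC_mk, betaC_mk]
        _ = algebraMap P5 LL (X 1 * X 3) * algebraMap P5 LL (X 2) := by
              simp only [alphaC, aeval_X]; rw [vA4, vA0]
        _ = algebraMap P5 LL (X 1) * algebraMap P5 LL (X 2 * X 3) := by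
              simp only [map_mul]; ring
    · show chiC (psiChart (X 2)) = algebraMap P5 LL (X 2)
      rw [psi2, chiC_aB, betaC_mk]
      simp only [alphaC, aeval_X]
      exact vA0
    · show chiC (psiChart (X 3)) = algebraMap P5 LL (X 3)
      rw [psi3, chiC_aB, betaC_mk]
      simp only [alphaC, aeval_X]
      exact vA1
    · show chiC (psiChart (X 4)) = algebraMap P5 LL (X 4)
      rw [psi4, chiC_aB, betaC_mk]
      simp only [alphaC, aeval_X]
      exact vA5

theorem stmt_8 :
    ∃ hc : IsUnit (psiChart.toRingHom (MvPolynomial.X 2 * MvPolynomial.X 3)),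
      Function.Bijective
        (IsLocalization.Away.lift
          (S := Localization.Away
            (MvPolynomial.X 2 * MvPolynomial.X 3 : MvPolynomial (Fin 5) ℂ))
          (MvPolynomial.X 2 * MvPolynomial.X 3) hc) := by
  refine ⟨hcU, ?_⟩
  rw [Function.bijective_iff_has_inverse]
  exact ⟨chiC, fun x => RingHom.congr_fun comp2 x, fun x => RingHom.congr_fun comp1 x⟩

end
end

section
/- Let (I, J) be an admissible pair of nonempty finite sets of natural numbers, and let k be a natural number with k ∉ I and k < max I. Then the pair (I ∪ {k}, J) is admissible, and a(I ∪ {k}, J) + σ(J, k) = a(I, J) + 2·σ(J, max I). -/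
/-- The maximum of a finite set of natural numbers (`0` for the empty set). -/
def maxE (I : Finset ℕ) : ℕ := I.sup id

/-- `σ(I, k)`: the number of elements of `I` that are `< k`. -/
def sigmaC (I : Finset ℕ) (k : ℕ) : ℕ := (I.filter (fun i => i < k)).card

/-- A pair `(I, J)` of nonempty finite sets of natural numbers is admissible if
`max I ∈ J` and every `j ∈ J` with `j < max I` belongs to `I`. -/
def Adm (I J : Finset ℕ) : Prop :=
  I.Nonempty ∧ J.Nonempty ∧ maxE I ∈ J ∧ ∀ j ∈ J, j < maxE I → j ∈ I

/-- `a(I, J) = (Σ_{j ∈ J, j < max I} σ(I, j)) + (|I| - 1)·σ(J, max I)`. -/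
def aVal (I J : Finset ℕ) : ℕ :=
  (∑ j ∈ J.filter (fun j => j < maxE I), sigmaC I j) + (I.card - 1) * sigmaC J (maxE I)

theorem stmt_10 (I J : Finset ℕ) (hadm : Adm I J) (k : ℕ)
    (hkI : k ∉ I) (hk : k < maxE I) :
    Adm (insert k I) J ∧
    aVal (insert k I) J + sigmaC J k = aVal I J + 2 * sigmaC J (maxE I) := by
  obtain ⟨hI, hJ, hMJ, hcl⟩ := hadm
  have hkJ : k ∉ J := fun h => hkI (hcl k h hk)
  have hM : maxE (insert k I) = maxE I := by
    unfold maxE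
    rw [Finset.sup_insert, id]
    exact max_eq_right hk.le
  refine ⟨⟨Finset.insert_nonempty _ _, hJ, hM ▸ hMJ,
    fun j hj hlt => Finset.mem_insert_of_mem (hcl j hj (hM ▸ hlt))⟩, ?_⟩
  set M := maxE I with hMdef
  have hsig : ∀ j, sigmaC (insert k I) j = sigmaC I j + if k < j then 1 else 0 := by
    intro j
    unfold sigmaC
    rw [Finset.filter_insert]
    split
    · rw [Finset.card_insert_of_notMem (fun h => hkI (Finset.mem_filter.mp h).1)]
    · simp
  have hcard : (insert k I).card = I.card + 1 := Finset.card_insert_of_notMem hkI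
  have key : (J.filter (fun j => j < M ∧ k < j)).card + (J.filter (fun j => j < k)).card
      = (J.filter (fun j => j < M)).card := by
    rw [← Finset.card_union_of_disjoint]
    · congr 1
      ext j
      simp only [Finset.mem_union, Finset.mem_filter]
      constructor
      · rintro (⟨hj, h1, _⟩ | ⟨hj, h1⟩)
        · exact ⟨hj, h1⟩
        · exact ⟨hj, by omega⟩
      · rintro ⟨hj, h1⟩
        have hne : j ≠ k := fun e => hkJ (e ▸ hj)
        rcases lt_or_gt_of_ne hne with h | h
        · right; exact ⟨hj, h⟩
        · left; exact ⟨hj, h1, h⟩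
    · rw [Finset.disjoint_left]
      intro j hj hj'
      simp only [Finset.mem_filter] at hj hj'
      omega
  unfold aVal
  rw [hM, hcard]
  simp only [hsig, Finset.sum_add_distrib, ← Finset.card_filter, Finset.filter_filter,
    Nat.add_sub_cancel]
  have hs : sigmaC J k = (J.filter (fun j => j < k)).card := rfl
  have hs2 : sigmaC J M = (J.filter (fun j => j < M)).card := rfl
  have hI1 : 1 ≤ I.card := Finset.card_pos.mpr hI
  rw [hs, hs2]
  simp only [← hMdef]
  obtain ⟨n, hn⟩ : ∃ n, I.card = n + 1 := ⟨I.card - 1, by omega⟩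
  rw [hn, Nat.add_sub_cancel]
  have key' : (Finset.filter (fun a => a < M ∧ k < a) J).card + (Finset.filter (fun j => j < k) J).card = (Finset.filter (fun j => j < M) J).card := key
  linarith [key']
end

section
/- Let (I, J) be an admissible pair of nonempty finite sets of natural numbers, set K := (I ∖ J) ∪ {j ∈ J : j ≥ max I}, and let k be a natural number with k ≤ max I. Then σ(K, k) + σ(J, k) = σ(I, k). -/
theorem stmt_11 (I J : Finset ℕ) (hadm : Adm I J)
    (K : Finset ℕ) (hK : K = (I \ J) ∪ J.filter (fun j => maxE I ≤ j))
    (k : ℕ) (hk : k ≤ maxE I) :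
    sigmaC K k + sigmaC J k = sigmaC I k := by
  obtain ⟨hI, hJ, hmem, hsub⟩ := hadm
  subst hK
  unfold sigmaC
  rw [Finset.filter_union, Finset.filter_filter]
  have h1 : J.filter (fun j => maxE I ≤ j ∧ j < k) = ∅ := by
    ext j
    simp only [Finset.mem_filter, Finset.notMem_empty, iff_false, not_and]
    intro _ hle
    omega
  rw [h1, Finset.union_empty, ← Finset.card_union_of_disjoint]
  · congr 1
    ext x
    simp only [Finset.mem_union, Finset.mem_filter, Finset.mem_sdiff]
    constructor
    · rintro (⟨⟨hxI, _⟩, hxk⟩ | ⟨hxJ, hxk⟩)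
      · exact ⟨hxI, hxk⟩
      · exact ⟨hsub x hxJ (lt_of_lt_of_le hxk hk), hxk⟩
    · rintro ⟨hxI, hxk⟩
      by_cases hxJ : x ∈ J
      · exact Or.inr ⟨hxJ, hxk⟩
      · exact Or.inl ⟨⟨hxI, hxJ⟩, hxk⟩
  · rw [Finset.disjoint_left]
    intro x hx1 hx2
    obtain ⟨hxIJ, _⟩ := Finset.mem_filter.mp hx1
    exact (Finset.mem_sdiff.mp hxIJ).2 (Finset.mem_filter.mp hx2).1
end

section
/- Let (I, J) be an admissible pair of nonempty finite sets of natural numbers, set K := (I ∖ J) ∪ {j ∈ J : j ≥ max I}, and let k ∈ J satisfy k > max I and suppose no element j of J satisfies max I < j < k. Then the pair (I ∪ {k}, J) is admissible, σ(K, max I) + σ(J, max I) = |I| − 1, and a(I ∪ {k}, J) = a(I, J) + 2·(|I| − 1) + σ(J, max I) + 1. -/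
theorem stmt_12 (I J : Finset ℕ) (hadm : Adm I J)
    (K : Finset ℕ) (hK : K = (I \ J) ∪ J.filter (fun j => maxE I ≤ j))
    (k : ℕ) (hkJ : k ∈ J) (hk : maxE I < k)
    (hgap : ∀ j ∈ J, ¬(maxE I < j ∧ j < k)) :
    Adm (insert k I) J ∧
    sigmaC K (maxE I) + sigmaC J (maxE I) = I.card - 1 ∧
    aVal (insert k I) J = aVal I J + 2 * (I.card - 1) + sigmaC J (maxE I) + 1 := by
  obtain ⟨hIne, hJne, hmJ, hdown⟩ := hadm
  set m := maxE I with hm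
  -- m ∈ I
  obtain ⟨x, hxI, hxe⟩ := Finset.exists_mem_eq_sup I hIne id
  have hmI : m ∈ I := by rw [hm, maxE, hxe]; exact hxI
  have hle : ∀ i ∈ I, i ≤ m := fun i hi => Finset.le_sup (f := id) hi
  have hkI : k ∉ I := fun h => absurd (hle k h) (not_le.mpr hk)
  -- maxE (insert k I) = k
  have hmax' : maxE (insert k I) = k := by
    rw [maxE, Finset.sup_insert]
    exact sup_eq_left.mpr hk.le
  -- Adm part
  have hAdm : Adm (insert k I) J := by
    refine ⟨⟨k, Finset.mem_insert_self k I⟩, hJne, by rw [hmax']; exact hkJ, ?_⟩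
    intro j hj hjk
    rw [hmax'] at hjk
    rcases lt_trichotomy j m with h | h | h
    · exact Finset.mem_insert_of_mem (hdown j hj h)
    · exact Finset.mem_insert_of_mem (h ▸ hmI)
    · exact absurd ⟨h, hjk⟩ (hgap j hj)
  -- filter facts
  have hIfilt : I.filter (fun i => i < m) = I.erase m := by
    ext i
    simp only [Finset.mem_filter, Finset.mem_erase]
    constructor
    · rintro ⟨h1, h2⟩; exact ⟨ne_of_lt h2, h1⟩
    · rintro ⟨h1, h2⟩; exact ⟨h2, lt_of_le_of_ne (hle i h2) h1⟩
  have hsigmaIm : sigmaC I m = I.card - 1 := by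
    rw [sigmaC, hIfilt, Finset.card_erase_of_mem hmI]
  -- part 2
  have hBsub : J.filter (fun i => i < m) ⊆ I.filter (fun i => i < m) := by
    intro j hj
    simp only [Finset.mem_filter] at *
    exact ⟨hdown j hj.1 hj.2, hj.2⟩
  have hKfilt : K.filter (fun i => i < m) =
      I.filter (fun i => i < m) \ J.filter (fun i => i < m) := by
    rw [hK]
    ext i
    simp only [Finset.mem_filter, Finset.mem_union, Finset.mem_sdiff]
    constructor
    · rintro ⟨h1 | ⟨h1, h2⟩, h3⟩
      · exact ⟨⟨h1.1, h3⟩, fun hc => h1.2 hc.1⟩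
      · exact absurd h3 (not_lt.mpr h2)
    · rintro ⟨⟨h1, h2⟩, h3⟩
      exact ⟨Or.inl ⟨h1, fun hc => h3 ⟨hc, h2⟩⟩, h2⟩
  have hpart2 : sigmaC K m + sigmaC J m = I.card - 1 := by
    rw [sigmaC, sigmaC, hKfilt, Finset.card_sdiff_add_card_eq_card hBsub, ← sigmaC, hsigmaIm]
  -- part 3
  have hmnot : m ∉ J.filter (fun j => j < m) := by simp
  have hJk : J.filter (fun j => j < k) = insert m (J.filter (fun j => j < m)) := by
    ext j
    simp only [Finset.mem_filter, Finset.mem_insert]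
    constructor
    · rintro ⟨h1, h2⟩
      rcases lt_trichotomy j m with h | h | h
      · exact Or.inr ⟨h1, h⟩
      · exact Or.inl h
      · exact absurd ⟨h, h2⟩ (hgap j h1)
    · rintro (h | ⟨h1, h2⟩)
      · exact ⟨h ▸ hmJ, h ▸ hk⟩
      · exact ⟨h1, h2.trans hk⟩
  have hsigmaJk : sigmaC J k = sigmaC J m + 1 := by
    rw [sigmaC, hJk, Finset.card_insert_of_notMem hmnot, ← sigmaC]
  have hsigmaI' : ∀ j, j < k → sigmaC (insert k I) j = sigmaC I j := by
    intro j hj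
    rw [sigmaC, Finset.filter_insert, if_neg (not_lt.mpr hj.le), ← sigmaC]
  have hcard' : (insert k I).card = I.card + 1 := Finset.card_insert_of_notMem hkI
  have h1 : ∀ j ∈ J.filter (fun j => j < m), sigmaC (insert k I) j = sigmaC I j := by
    intro j hj
    simp only [Finset.mem_filter] at hj
    exact hsigmaI' j (hj.2.trans hk)
  have hsum : ∑ j ∈ J.filter (fun j => j < k), sigmaC (insert k I) j
      = (∑ j ∈ J.filter (fun j => j < m), sigmaC I j) + (I.card - 1) := by
    rw [hJk, Finset.sum_insert hmnot, hsigmaI' m hk, hsigmaIm,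
      Finset.sum_congr rfl h1, add_comm]
  have hc1 : 1 ≤ I.card := Finset.card_pos.mpr hIne
  have hpart3 : aVal (insert k I) J = aVal I J + 2 * (I.card - 1) + sigmaC J m + 1 := by
    rw [aVal, aVal, hmax', hcard', ← hm, hsum, hsigmaJk]
    obtain ⟨t, ht⟩ : ∃ t, I.card = t + 1 := ⟨I.card - 1, by omega⟩
    rw [ht]
    simp only [Nat.add_sub_cancel]
    ring
  exact ⟨hAdm, hpart2, hpart3⟩
end

section
/- Let (I, J) be an admissible pair of nonempty finite sets of natural numbers, set K := (I ∖ J) ∪ {j ∈ J : j ≥ max I}, and let k be a natural number with k > max I. Then σ(K, k) + 2·σ(J, max I) = σ(J, k) + (|I| − 1). -/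
theorem stmt_13 (I J : Finset ℕ) (hadm : Adm I J)
    (K : Finset ℕ) (hK : K = (I \ J) ∪ J.filter (fun j => maxE I ≤ j))
    (k : ℕ) (hk : maxE I < k) :
    sigmaC K k + 2 * sigmaC J (maxE I) = sigmaC J k + (I.card - 1) := by
  obtain ⟨hI, hJ, hmJ, hJI⟩ := hadm
  set m := maxE I with hm
  have hle : ∀ i ∈ I, i ≤ m := fun i hi => Finset.le_sup (f := id) hi
  have hmI : m ∈ I := by
    obtain ⟨i, hi, hieq⟩ := Finset.exists_mem_eq_sup I hI id
    rw [hm, maxE, hieq]; exact hi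
  -- I ∩ J = insert m (J.filter (· < m))
  have hIJ : I ∩ J = insert m (J.filter (fun j => j < m)) := by
    ext x
    simp only [Finset.mem_inter, Finset.mem_insert, Finset.mem_filter]
    constructor
    · rintro ⟨hxI, hxJ⟩
      rcases eq_or_lt_of_le (hle x hxI) with h | h
      · exact Or.inl h
      · exact Or.inr ⟨hxJ, h⟩
    · rintro (rfl | ⟨hxJ, hxm⟩)
      · exact ⟨hmI, hmJ⟩
      · exact ⟨hJI x hxJ hxm, hxJ⟩
  have hmnot : m ∉ J.filter (fun j => j < m) := by
    simp
  have h1 : (I \ J).card + (sigmaC J m + 1) = I.card := by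
    have := Finset.card_sdiff_add_card_inter I J
    rw [hIJ, Finset.card_insert_of_notMem hmnot] at this
    simpa [sigmaC] using this
  have hd1 : Disjoint (J.filter (fun j => j < m)) (J.filter (fun j => m ≤ j ∧ j < k)) := by
    rw [Finset.disjoint_left]
    intro x hx hx'
    simp only [Finset.mem_filter] at hx hx'
    omega
  have h2 : sigmaC J m + (J.filter (fun j => m ≤ j ∧ j < k)).card = sigmaC J k := by
    rw [sigmaC, sigmaC, ← Finset.card_union_of_disjoint hd1]
    congr 1
    ext x
    simp only [Finset.mem_filter, Finset.mem_union]
    by_cases hx : x ∈ J <;> simp [hx] <;> omega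
  have hd2 : Disjoint (I \ J) (J.filter (fun j => m ≤ j ∧ j < k)) := by
    rw [Finset.disjoint_left]
    intro x hx hx'
    simp only [Finset.mem_sdiff] at hx
    simp only [Finset.mem_filter] at hx'
    exact hx.2 hx'.1
  have hKf : K.filter (fun i => i < k) = (I \ J) ∪ J.filter (fun j => m ≤ j ∧ j < k) := by
    subst hK
    ext x
    simp only [Finset.mem_filter, Finset.mem_union, Finset.mem_sdiff]
    constructor
    · rintro ⟨h | ⟨h1, h2⟩, hxk⟩
      · exact Or.inl h
      · exact Or.inr ⟨h1, h2, hxk⟩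
    · rintro (h | ⟨h1, h2, h3⟩)
      · exact ⟨Or.inl h, lt_of_le_of_lt (hle x h.1) hk⟩
      · exact ⟨Or.inr ⟨h1, h2⟩, h3⟩
  have h3 : sigmaC K k = (I \ J).card + (J.filter (fun j => m ≤ j ∧ j < k)).card := by
    rw [sigmaC, hKf, Finset.card_union_of_disjoint hd2]
  have hcard : 1 ≤ I.card := Finset.card_pos.mpr hI
  omega
end

section
/- Let (I, J) be an admissible pair of nonempty finite sets of natural numbers and let k be a natural number with k > max I. If k ∉ J, then (I, J ∪ {k}) is admissible and a(I, J ∪ {k}) = a(I, J); if k ∈ J, then (I, J ∖ {k}) is admissible and a(I, J ∖ {k}) = a(I, J). -/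
lemma filter_insert_eq (J : Finset ℕ) (k m : ℕ) (hk : ¬ k < m) :
    (insert k J).filter (fun j => j < m) = J.filter (fun j => j < m) := by
  rw [Finset.filter_insert, if_neg hk]

lemma filter_erase_eq (J : Finset ℕ) (k m : ℕ) (hk : ¬ k < m) :
    (J.erase k).filter (fun j => j < m) = J.filter (fun j => j < m) := by
  ext x
  simp only [Finset.mem_filter, Finset.mem_erase]
  constructor
  · rintro ⟨⟨_, hx⟩, h⟩; exact ⟨hx, h⟩
  · rintro ⟨hx, h⟩
    exact ⟨⟨fun he => hk (he ▸ h), hx⟩, h⟩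

theorem stmt_14 (I J : Finset ℕ) (hadm : Adm I J) (k : ℕ) (hk : maxE I < k) :
    (k ∉ J → Adm I (insert k J) ∧ aVal I (insert k J) = aVal I J) ∧
    (k ∈ J → Adm I (J.erase k) ∧ aVal I (J.erase k) = aVal I J) := by
  obtain ⟨hI, hJ, hmax, hlt⟩ := hadm
  have hnk : ¬ k < maxE I := by omega
  constructor
  · intro _
    refine ⟨⟨hI, Finset.insert_nonempty _ _, Finset.mem_insert_of_mem hmax, ?_⟩, ?_⟩
    · intro j hj hjlt
      rcases Finset.mem_insert.mp hj with h | h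
      · omega
      · exact hlt j h hjlt
    · unfold aVal sigmaC
      rw [filter_insert_eq J k (maxE I) hnk]
  · intro hkJ
    have hne : maxE I ∈ J.erase k := Finset.mem_erase.mpr ⟨by omega, hmax⟩
    refine ⟨⟨hI, ⟨_, hne⟩, hne, ?_⟩, ?_⟩
    · intro j hj hjlt
      exact hlt j (Finset.mem_of_mem_erase hj) hjlt
    · unfold aVal sigmaC
      rw [filter_erase_eq J k (maxE I) hnk]
end

section
/- Let (I, J) be an admissible pair of nonempty finite sets of natural numbers and let k be a natural number with k ∈ I, k ∉ J and k < max I. Then the pair (I, J ∪ {k}) is admissible and a(I, J ∪ {k}) = a(I, J) + σ(I, k) + (|I| − 1). -/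
theorem stmt_15 (I J : Finset ℕ) (hadm : Adm I J) (k : ℕ)
    (hkI : k ∈ I) (hkJ : k ∉ J) (hk : k < maxE I) :
    Adm I (insert k J) ∧
    aVal I (insert k J) = aVal I J + sigmaC I k + (I.card - 1) := by
  obtain ⟨hI, hJ, hmax, hadm'⟩ := hadm
  constructor
  · refine ⟨hI, ⟨k, Finset.mem_insert_self _ _⟩, Finset.mem_insert_of_mem hmax, ?_⟩
    intro j hj hjlt
    rcases Finset.mem_insert.mp hj with rfl | hj
    · exact hkI
    · exact hadm' j hj hjlt
  · have hfilt : (insert k J).filter (fun j => j < maxE I)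
        = insert k (J.filter (fun j => j < maxE I)) := by
      rw [Finset.filter_insert, if_pos hk]
    have hkf : k ∉ J.filter (fun j => j < maxE I) := fun h =>
      hkJ (Finset.mem_of_mem_filter _ h)
    have hsum : ∑ j ∈ (insert k J).filter (fun j => j < maxE I), sigmaC I j
        = sigmaC I k + ∑ j ∈ J.filter (fun j => j < maxE I), sigmaC I j := by
      rw [hfilt, Finset.sum_insert hkf]
    have hsig : sigmaC (insert k J) (maxE I) = sigmaC J (maxE I) + 1 := by
      unfold sigmaC
      rw [Finset.filter_insert, if_pos hk, Finset.card_insert_of_notMem hkf]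
    unfold aVal
    rw [hsum, hsig, Nat.mul_add, Nat.mul_one]
    ring
end

section
/- Let I and J be nonempty finite sets of natural numbers such that max I ∉ J and every j ∈ J with j < max I belongs to I, and let k ∈ J satisfy k > max I with no element j of J satisfying max I < j < k. Then the pairs (I ∪ {k}, J) and (I, J ∪ {max I}) are both admissible, and a(I ∪ {k}, J) = a(I, J ∪ {max I}) + σ(J, max I). -/
theorem stmt_17 (I J : Finset ℕ) (hI : I.Nonempty) (hJ : J.Nonempty)
    (hmax : maxE I ∉ J) (hsub : ∀ j ∈ J, j < maxE I → j ∈ I)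
    (k : ℕ) (hkJ : k ∈ J) (hk : maxE I < k)
    (hgap : ∀ j ∈ J, ¬(maxE I < j ∧ j < k)) :
    Adm (insert k I) J ∧ Adm I (insert (maxE I) J) ∧
    aVal (insert k I) J = aVal I (insert (maxE I) J) + sigmaC J (maxE I) := by
  have hmk : maxE (insert k I) = k := by
    rw [maxE, Finset.sup_insert]
    exact sup_eq_left.mpr (le_of_lt hk)
  have hkI : k ∉ I := fun h => absurd (Finset.le_sup (f := id) h) (not_le.mpr hk)
  have key : ∀ j ∈ J, j < k → j < maxE I := by
    intro j hj hjk
    rcases lt_trichotomy j (maxE I) with h | h | h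
    · exact h
    · exact absurd (h ▸ hj) hmax
    · exact absurd ⟨h, hjk⟩ (hgap j hj)
  refine ⟨⟨⟨k, Finset.mem_insert_self k I⟩, hJ, by rw [hmk]; exact hkJ, ?_⟩,
    ⟨hI, ⟨maxE I, Finset.mem_insert_self _ _⟩, Finset.mem_insert_self _ _, ?_⟩, ?_⟩
  · intro j hj hjk
    rw [hmk] at hjk
    exact Finset.mem_insert_of_mem (hsub j hj (key j hj hjk))
  · intro j hj hjm
    rcases Finset.mem_insert.mp hj with h | h
    · exact absurd hjm (by omega)
    · exact hsub j h hjm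
  · have hfilt : J.filter (fun j => j < k) = J.filter (fun j => j < maxE I) := by
      apply Finset.filter_congr
      intro j hj
      exact ⟨key j hj, fun h => lt_trans h hk⟩
    have hsig : sigmaC J k = sigmaC J (maxE I) := by
      rw [sigmaC, sigmaC, hfilt]
    have hsum : ∀ j ∈ J.filter (fun j => j < maxE I),
        sigmaC (insert k I) j = sigmaC I j := by
      intro j hj
      have hjm : j < maxE I := (Finset.mem_filter.mp hj).2
      rw [sigmaC, sigmaC, Finset.filter_insert, if_neg (by omega)]
    have hsig2 : sigmaC (insert (maxE I) J) (maxE I) = sigmaC J (maxE I) := by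
      rw [sigmaC, sigmaC, Finset.filter_insert, if_neg (by omega)]
    have hcard : (insert k I).card = I.card + 1 := Finset.card_insert_of_notMem hkI
    have hc1 : I.card - 1 + 1 = I.card := Nat.succ_pred_eq_of_pos hI.card_pos
    rw [aVal, aVal, hmk, hfilt, Finset.sum_congr rfl hsum, hsig, hcard, hsig2,
      Finset.filter_insert, if_neg (by omega : ¬ maxE I < maxE I)]
    have : (I.card + 1 - 1) * sigmaC J (maxE I)
        = (I.card - 1) * sigmaC J (maxE I) + sigmaC J (maxE I) := by
      rw [Nat.add_sub_cancel]
      nlinarith [hI.card_pos]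
    rw [this]
    ring
end

section
/- Let I and J be nonempty finite sets of natural numbers such that max I ∈ J, and let k ∈ J satisfy k < max I, k ∉ I, and suppose every j ∈ J with j < max I and j ≠ k belongs to I. Then the pairs (I ∪ {k}, J) and (I, J ∖ {k}) are both admissible, and σ(I, k) + a(I ∪ {k}, J) ≡ |I| + σ(J, k) + a(I, J ∖ {k}) (mod 2). -/
lemma maxE_insert (I : Finset ℕ) (k : ℕ) (hk : k < maxE I) :
    maxE (insert k I) = maxE I := by
  unfold maxE at hk ⊢
  rw [Finset.sup_insert, id]
  omega

lemma sigmaC_insert (I : Finset ℕ) (k : ℕ) (hkI : k ∉ I) (j : ℕ) :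
    sigmaC (insert k I) j = sigmaC I j + if k < j then 1 else 0 := by
  unfold sigmaC
  rw [Finset.filter_insert]
  split_ifs with h
  · rw [Finset.card_insert_of_notMem (by simp [hkI])]
  · rw [Nat.add_zero]

theorem stmt_18 (I J : Finset ℕ) (hI : I.Nonempty) (hJ : J.Nonempty)
    (hmax : maxE I ∈ J)
    (k : ℕ) (hkJ : k ∈ J) (hk : k < maxE I) (hkI : k ∉ I)
    (hsub : ∀ j ∈ J, j < maxE I → j ≠ k → j ∈ I) :
    Adm (insert k I) J ∧ Adm I (J.erase k) ∧
    (sigmaC I k + aVal (insert k I) J) ≡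
      (I.card + sigmaC J k + aVal I (J.erase k)) [MOD 2] := by
  set M := maxE I with hM
  have hMk : M ≠ k := by omega
  refine ⟨⟨⟨k, Finset.mem_insert_self _ _⟩, hJ, by rw [maxE_insert I k hk]; exact hmax, ?_⟩,
    ⟨hI, ⟨M, Finset.mem_erase.2 ⟨hMk, hmax⟩⟩, Finset.mem_erase.2 ⟨hMk, hmax⟩, ?_⟩, ?_⟩
  · intro j hjJ hjM
    rw [maxE_insert I k hk] at hjM
    by_cases hjk : j = k
    · exact hjk ▸ Finset.mem_insert_self _ _
    · exact Finset.mem_insert_of_mem (hsub j hjJ hjM hjk)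
  · intro j hj hjM
    rcases Finset.mem_erase.1 hj with ⟨hjk, hjJ⟩
    exact hsub j hjJ hjM hjk
  · -- the congruence
    have hsplit : J.filter (fun j => j < M) =
        insert k ((J.erase k).filter (fun j => j < M)) := by
      ext j
      simp only [Finset.mem_filter, Finset.mem_insert, Finset.mem_erase]
      constructor
      · rintro ⟨hjJ, hjM⟩
        by_cases hjk : j = k
        · exact Or.inl hjk
        · exact Or.inr ⟨⟨hjk, hjJ⟩, hjM⟩
      · rintro (rfl | ⟨⟨_, hjJ⟩, hjM⟩)
        · exact ⟨hkJ, hk⟩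
        · exact ⟨hjJ, hjM⟩
    set Jf := (J.erase k).filter (fun j => j < M) with hJf
    have hkJf : k ∉ Jf := by simp [hJf]
    -- sum over insert
    have hsum : ∑ j ∈ J.filter (fun j => j < M), sigmaC (insert k I) j =
        sigmaC I k + (∑ j ∈ Jf, sigmaC I j + (Jf.filter (fun j => k < j)).card) := by
      rw [hsplit, Finset.sum_insert hkJf, sigmaC_insert I k hkI k, if_neg (lt_irrefl k)]
      have h : ∑ j ∈ Jf, sigmaC (insert k I) j
          = ∑ j ∈ Jf, sigmaC I j + (Jf.filter (fun j => k < j)).card := by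
        calc ∑ j ∈ Jf, sigmaC (insert k I) j
            = ∑ j ∈ Jf, (sigmaC I j + if k < j then 1 else 0) :=
              Finset.sum_congr rfl fun j _ => sigmaC_insert I k hkI j
          _ = ∑ j ∈ Jf, sigmaC I j + ∑ j ∈ Jf, (if k < j then 1 else 0) := by
              rw [Finset.sum_add_distrib]
          _ = ∑ j ∈ Jf, sigmaC I j + (Jf.filter (fun j => k < j)).card := by
              congr 1
              rw [← Finset.sum_filter, Finset.sum_const, smul_eq_mul, mul_one]
      omega
    -- sigmaC of erase at M
    have hcardsplit : sigmaC (J.erase k) M = sigmaC J k + (Jf.filter (fun j => k < j)).card := by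
      have h1 : Jf.filter (fun j => j < k) = J.filter (fun j => j < k) := by
        ext j
        simp only [hJf, Finset.mem_filter, Finset.mem_erase]
        constructor
        · rintro ⟨⟨⟨_, hjJ⟩, _⟩, hjk⟩
          exact ⟨hjJ, hjk⟩
        · rintro ⟨hjJ, hjk⟩
          exact ⟨⟨⟨by omega, hjJ⟩, by omega⟩, hjk⟩
      have h2 : Jf.filter (fun j => ¬ j < k) = Jf.filter (fun j => k < j) := by
        ext j
        simp only [hJf, Finset.mem_filter, Finset.mem_erase]
        constructor
        · rintro ⟨⟨⟨hjk, hjJ⟩, hjM⟩, h⟩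
          exact ⟨⟨⟨hjk, hjJ⟩, hjM⟩, by omega⟩
        · rintro ⟨⟨⟨hjk, hjJ⟩, hjM⟩, h⟩
          exact ⟨⟨⟨hjk, hjJ⟩, hjM⟩, by omega⟩
      have := Finset.card_filter_add_card_filter_not
        (s := Jf) (p := fun j => j < k)
      rw [h1, h2] at this
      have hJfM : sigmaC (J.erase k) M = Jf.card := rfl
      rw [hJfM, ← this]
      rfl
    -- sigmaC J M = sigmaC (J.erase k) M + 1
    have hJM : sigmaC J M = sigmaC (J.erase k) M + 1 := by
      unfold sigmaC
      rw [hsplit]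
      rw [Finset.card_insert_of_notMem hkJf]
    have hn : 1 ≤ I.card := Finset.card_pos.2 hI
    have hcard : (insert k I).card = I.card + 1 := Finset.card_insert_of_notMem hkI
    have hMe : maxE (insert k I) = M := maxE_insert I k hk
    have hMe2 : maxE I = M := rfl
    unfold aVal
    rw [hMe, hMe2, hsum, hcard, hJM, hcardsplit]
    set S := ∑ j ∈ Jf, sigmaC I j
    set C := (Jf.filter (fun j => k < j)).card
    set s := sigmaC I k
    set q := sigmaC J k
    obtain ⟨m, hm⟩ : ∃ m, I.card = m + 1 := ⟨I.card - 1, by omega⟩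
    rw [hm]
    simp only [Nat.add_sub_cancel]
    have h2 : (m + 1) * (q + C + 1) = m * (q + C) + m + q + C + 1 := by ring
    rw [h2]
    show _ % 2 = _ % 2
    omega
end
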